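/- arXiv:0809.4387 — 6 statements merged into one kernel-verified Lean document; each statement's English description precedes it below -/
import Mathlib

section
/- Let (p_j)_{j≥1} be positive reals summing to 1 and define Φ_r(t) = ∑_{j≥1} e^{-t p_j} (t p_j)^r / r! for t > 0, r ≥ 1. Then for all integers 1 ≤ s < r and all t > 0: Φ_s(t/2) ≥ Φ_r(t) · (e/(r-s))^{r-s} · r! / (s! 2^r). -/
/-!
The inequality holds termwise. With `y = t p_j / 2` and `k = r - s`, the `j`-th term of `Φ_r(t)`
times the constant is the `j`-th term of `Φ_s(t/2)` times `e^{-y} (e y / k)^k`, and this factor is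
at most `1` because `e u ≤ e^u` for `u = y / k`. Since `s ≥ 1`, the terms of `Φ_s(t/2)` are
`O(p_j)`, so that series converges.
-/

/-- Expected number of boxes containing exactly `r` balls at time `t`
in the Poissonized occupancy scheme with frequencies `p`. -/
noncomputable def Phi (p : ℕ → ℝ) (r : ℕ) (t : ℝ) : ℝ :=
  ∑' j : ℕ, Real.exp (-(t * p j)) * (t * p j) ^ r / r.factorial

open Real

noncomputable def poissonTerm (r : ℕ) (x : ℝ) : ℝ :=
  exp (-x) * x ^ r / r.factorial

theorem Phi_eq_tsum_poissonTerm (p : ℕ → ℝ) (r : ℕ) (t : ℝ) :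
    Phi p r t = ∑' j, poissonTerm r (t * p j) :=
  rfl

theorem poissonTerm_nonneg (r : ℕ) {x : ℝ} (hx : 0 ≤ x) : 0 ≤ poissonTerm r x := by
  unfold poissonTerm
  positivity

theorem poissonTerm_succ_le {x : ℝ} (hx : 0 ≤ x) (n : ℕ) : poissonTerm (n + 1) x ≤ x := by
  have hfac : (n.factorial : ℝ) ≤ (n + 1).factorial := by
    exact_mod_cast Nat.factorial_le n.le_succ
  calc poissonTerm (n + 1) x = x * (exp (-x) * (x ^ n / (n + 1).factorial)) := by
        unfold poissonTerm; ring
    _ ≤ x * (exp (-x) * (x ^ n / n.factorial)) := by gcongr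
    _ ≤ x * (exp (-x) * exp x) := by gcongr; exact pow_div_factorial_le_exp x hx n
    _ = x := by rw [← exp_add, neg_add_cancel, exp_zero, mul_one]

theorem summable_poissonTerm {p : ℕ → ℝ} (hp : ∀ j, 0 ≤ p j) (hsum : Summable p) {r : ℕ}
    (hr : r ≠ 0) {c : ℝ} (hc : 0 ≤ c) : Summable fun j => poissonTerm r (c * p j) := by
  obtain ⟨n, rfl⟩ := Nat.exists_eq_succ_of_ne_zero hr
  exact (hsum.mul_left c).of_nonneg_of_le (fun j => poissonTerm_nonneg _ (by positivity [hp j]))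
    fun j => poissonTerm_succ_le (by positivity [hp j]) n

theorem exp_one_mul_div_pow_le_exp {y : ℝ} (hy : 0 ≤ y) (k : ℕ) :
    (exp 1 * y / k) ^ k ≤ exp y := by
  rcases k.eq_zero_or_pos with rfl | hk
  · simpa using one_le_exp hy
  calc (exp 1 * y / k) ^ k = (exp 1 * (y / k)) ^ k := by ring
    _ ≤ exp (y / k) ^ k := by gcongr; exact exp_one_mul_le_exp
    _ = exp y := by rw [← exp_nat_mul, mul_div_cancel₀ _ (by positivity)]

theorem poissonTerm_add_mul_le {y : ℝ} (hy : 0 ≤ y) (s k : ℕ) :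
    poissonTerm (s + k) (2 * y) *
        ((exp 1 / k) ^ k * (((s + k).factorial : ℝ) / (s.factorial * 2 ^ (s + k))))
      ≤ poissonTerm s y := by
  have hexp : exp (-(2 * y)) = exp (-y) * exp (-y) := by rw [← exp_add]; ring_nf
  have hfactor : exp (-y) * (exp 1 * y / k) ^ k ≤ 1 := by
    rw [exp_neg, inv_mul_le_one₀ (exp_pos _)]
    exact exp_one_mul_div_pow_le_exp hy k
  calc poissonTerm (s + k) (2 * y) *
        ((exp 1 / k) ^ k * (((s + k).factorial : ℝ) / (s.factorial * 2 ^ (s + k))))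
      = poissonTerm s y * (exp (-y) * (exp 1 * y / k) ^ k) := by
        unfold poissonTerm
        rw [hexp]
        field_simp
        ring
    _ ≤ poissonTerm s y := mul_le_of_le_one_right (poissonTerm_nonneg s hy) hfactor

theorem stmt_3 (p : ℕ → ℝ) (hp : ∀ j, 0 < p j) (hsum : ∑' j : ℕ, p j = 1)
    (r s : ℕ) (hs : 1 ≤ s) (hsr : s < r) (t : ℝ) (ht : 0 < t) :
    Phi p s (t / 2) ≥
      Phi p r t * (Real.exp 1 / ((r : ℝ) - s)) ^ (r - s) *
        ((r.factorial : ℝ) / (s.factorial * 2 ^ r)) := by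
  have hp' : ∀ j, 0 ≤ p j := fun j => (hp j).le
  have hp_summable : Summable p := by
    by_contra h
    simp [tsum_eq_zero_of_not_summable h] at hsum
  obtain ⟨k, rfl⟩ : ∃ k, r = s + k := ⟨r - s, by omega⟩
  have hk : ((s + k : ℕ) : ℝ) - s = k := by push_cast; ring
  rw [hk, Nat.add_sub_cancel_left, mul_assoc, Phi_eq_tsum_poissonTerm, Phi_eq_tsum_poissonTerm,
    ← tsum_mul_right]
  have hle : ∀ j, poissonTerm (s + k) (t * p j) *
      ((exp 1 / k) ^ k * (((s + k).factorial : ℝ) / (s.factorial * 2 ^ (s + k))))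
        ≤ poissonTerm s (t / 2 * p j) := fun j => by
    rw [show t * p j = 2 * (t / 2 * p j) by ring]
    exact poissonTerm_add_mul_le (by positivity [hp j]) s k
  have hsummable : Summable fun j => poissonTerm s (t / 2 * p j) :=
    summable_poissonTerm hp' hp_summable (by omega) (by positivity)
  have hnonneg : ∀ j, 0 ≤ poissonTerm (s + k) (t * p j) *
      ((exp 1 / k) ^ k * (((s + k).factorial : ℝ) / (s.factorial * 2 ^ (s + k)))) :=
    fun j => mul_nonneg (poissonTerm_nonneg _ (by positivity [hp j])) (by positivity)
  exact Summable.tsum_le_tsum hle (hsummable.of_nonneg_of_le hnonneg hle) hsummable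
end

section
/- With Φ_r(t) = ∑_{j≥1} e^{-t p_j}(t p_j)^r/r! and V_r(t) = ∑_{j≥1} e^{-t p_j}(t p_j)^r/r! · (1 - e^{-t p_j}(t p_j)^r/r!), there exists a constant k_r = 1 - e^{-r} r^r/r! > 0 such that Φ_r(t) > V_r(t) > k_r Φ_r(t) for all t > 0. Consequently V_r(t) → ∞ as t → ∞ if and only if Φ_r(t) → ∞. -/
/-- Variance of the number of boxes with exactly `r` balls at time `t`. -/
noncomputable def Var (p : ℕ → ℝ) (r : ℕ) (t : ℝ) : ℝ :=
  ∑' j : ℕ, Real.exp (-(t * p j)) * (t * p j) ^ r / r.factorial *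
    (1 - Real.exp (-(t * p j)) * (t * p j) ^ r / r.factorial)

open Real Filter Nat

section BernoulliVariance

variable {ι : Type*} {f : ι → ℝ} {M : ℝ}

lemma summable_mul_one_sub (hf : Summable f) (h0 : ∀ j, 0 ≤ f j) (hle : ∀ j, f j ≤ M) :
    Summable fun j => f j * (1 - f j) := by
  have hsq : Summable fun j => f j * f j :=
    .of_nonneg_of_le (fun j => mul_nonneg (h0 j) (h0 j))
      (fun j => mul_le_mul_of_nonneg_right (hle j) (h0 j)) (hf.mul_left M)
  simpa only [mul_one_sub] using hf.sub hsq

lemma tsum_mul_one_sub_lt_tsum (hf : Summable f) (h0 : ∀ j, 0 ≤ f j) (hle : ∀ j, f j ≤ M)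
    {j₀ : ι} (hj₀ : 0 < f j₀) :
    ∑' j, f j * (1 - f j) < ∑' j, f j :=
  (summable_mul_one_sub hf h0 hle).tsum_lt_tsum (i := j₀)
    (fun j => by nlinarith [sq_nonneg (f j)]) (by nlinarith) hf

lemma mul_tsum_lt_tsum_mul_one_sub (hf : Summable f) (h0 : ∀ j, 0 ≤ f j) (hle : ∀ j, f j ≤ M)
    {j₀ : ι} (hj₀ : 0 < f j₀) (hj₀M : f j₀ < M) :
    (1 - M) * ∑' j, f j < ∑' j, f j * (1 - f j) := by
  rw [← tsum_mul_left]
  exact (hf.mul_left _).tsum_lt_tsum (i := j₀)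
    (fun j => by nlinarith [mul_nonneg (h0 j) (sub_nonneg.mpr (hle j))])
    (by nlinarith [mul_pos hj₀ (sub_pos.mpr hj₀M)]) (summable_mul_one_sub hf h0 hle)

end BernoulliVariance

section PoissonWeight

noncomputable def poissonWeight (r : ℕ) (x : ℝ) : ℝ := exp (-x) * x ^ r / r !

variable {r : ℕ} {x : ℝ}

lemma poissonWeight_nonneg (hx : 0 ≤ x) : 0 ≤ poissonWeight r x := by
  unfold poissonWeight; positivity

lemma poissonWeight_pos (hx : 0 < x) : 0 < poissonWeight r x := by
  unfold poissonWeight; positivity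

lemma poissonWeight_le_self (hr : r ≠ 0) (hx : 0 ≤ x) : poissonWeight r x ≤ x := by
  obtain ⟨n, rfl⟩ := exists_eq_succ_of_ne_zero hr
  have hn : exp (-x) * x ^ n ≤ n ! := by
    rw [exp_neg, inv_mul_le_iff₀ (exp_pos x), ← div_le_iff₀ (by positivity)]
    exact pow_div_factorial_le_exp x hx n
  have hfac : (n ! : ℝ) ≤ (n + 1)! := by exact_mod_cast factorial_le (le_succ n)
  calc poissonWeight (n + 1) x = x * (exp (-x) * x ^ n / (n + 1)!) := by
        unfold poissonWeight; ring
    _ ≤ x * 1 := by gcongr; rw [div_le_one (by positivity)]; linarith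
    _ = x := mul_one x

lemma poissonWeight_lt_poissonWeight_self (hr : r ≠ 0) (hx : 0 ≤ x) (hxr : x ≠ r) :
    poissonWeight r x < poissonWeight r r := by
  have hr' : (0 : ℝ) < r := by positivity
  have hy : x / r - 1 ≠ 0 := by
    rw [sub_ne_zero, ne_eq, div_eq_one_iff_eq hr'.ne']; exact hxr
  have hpow : (x / r) ^ r < exp (x - r) := by
    have h := pow_lt_pow_left₀ (by simpa using add_one_lt_exp hy) (by positivity) hr
    rwa [← exp_nat_mul, mul_sub, mul_div_cancel₀ _ hr'.ne', mul_one] at h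
  rw [div_pow, div_lt_iff₀ (by positivity), exp_sub] at hpow
  refine div_lt_div_of_pos_right ?_ (by positivity)
  calc exp (-x) * x ^ r < exp (-x) * (exp x / exp r * r ^ r) := by gcongr
    _ = exp (-r) * r ^ r := by rw [exp_neg, exp_neg]; field_simp

lemma poissonWeight_le_poissonWeight_self (hr : r ≠ 0) (hx : 0 ≤ x) :
    poissonWeight r x ≤ poissonWeight r r := by
  rcases eq_or_ne x r with rfl | hxr
  · rfl
  · exact (poissonWeight_lt_poissonWeight_self hr hx hxr).le

lemma poissonWeight_self_lt_one (hr : r ≠ 0) : poissonWeight r r < 1 := by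
  have hexp := sum_le_exp_of_nonneg r.cast_nonneg (r + 1)
  rw [Finset.sum_range_succ] at hexp
  have hone : 1 ≤ ∑ i ∈ Finset.range r, (r : ℝ) ^ i / i ! := by
    simpa using Finset.single_le_sum (f := fun i => (r : ℝ) ^ i / i !)
      (fun i _ => by positivity) (Finset.mem_range.mpr (pos_of_ne_zero hr))
  unfold poissonWeight
  rw [exp_neg, mul_div_assoc, inv_mul_lt_iff₀ (exp_pos _), mul_one]
  linarith

lemma summable_poissonWeight_mul {p : ℕ → ℝ} (hp : ∀ j, 0 ≤ p j) (hps : Summable p) (hr : r ≠ 0)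
    {t : ℝ} (ht : 0 ≤ t) : Summable fun j => poissonWeight r (t * p j) :=
  .of_nonneg_of_le (fun j => poissonWeight_nonneg (mul_nonneg ht (hp j)))
    (fun j => poissonWeight_le_self hr (mul_nonneg ht (hp j))) (hps.mul_left t)

end PoissonWeight

theorem stmt_4 (p : ℕ → ℝ) (hp : ∀ j, 0 < p j) (hsum : ∑' j : ℕ, p j = 1)
    (r : ℕ) (hr : 1 ≤ r) :
    (0 < 1 - Real.exp (-(r : ℝ)) * (r : ℝ) ^ r / r.factorial) ∧
    (∀ t : ℝ, 0 < t →
      Var p r t < Phi p r t ∧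
      (1 - Real.exp (-(r : ℝ)) * (r : ℝ) ^ r / r.factorial) * Phi p r t < Var p r t) ∧
    (Filter.Tendsto (fun t => Var p r t) Filter.atTop Filter.atTop ↔
      Filter.Tendsto (fun t => Phi p r t) Filter.atTop Filter.atTop) := by
  have hr₀ : r ≠ 0 := one_le_iff_ne_zero.mp hr
  have hk : 0 < 1 - poissonWeight r r := sub_pos.mpr (poissonWeight_self_lt_one hr₀)
  have hps : Summable p := by
    by_contra h
    simp [tsum_eq_zero_of_not_summable h] at hsum
  have bounds (t : ℝ) (ht : 0 < t) :
      Var p r t < Phi p r t ∧ (1 - poissonWeight r r) * Phi p r t < Var p r t := by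
    have hf := summable_poissonWeight_mul (fun j => (hp j).le) hps hr₀ ht.le
    have hpos (j : ℕ) : 0 < poissonWeight r (t * p j) := poissonWeight_pos (mul_pos ht (hp j))
    have hle (j : ℕ) : poissonWeight r (t * p j) ≤ poissonWeight r r :=
      poissonWeight_le_poissonWeight_self hr₀ (mul_pos ht (hp j)).le
    obtain ⟨j₀, hj₀⟩ : ∃ j, p j < r / t :=
      (hps.tendsto_atTop_zero.eventually (gt_mem_nhds (by positivity))).exists
    have hj₀r : t * p j₀ ≠ r := by rw [lt_div_iff₀ ht] at hj₀; linarith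
    exact ⟨tsum_mul_one_sub_lt_tsum hf (fun j => (hpos j).le) hle (hpos 0),
      mul_tsum_lt_tsum_mul_one_sub hf (fun j => (hpos j).le) hle (hpos j₀)
        (poissonWeight_lt_poissonWeight_self hr₀ (mul_pos ht (hp j₀)).le hj₀r)⟩
  refine ⟨hk, bounds, fun h => ?_, fun h => ?_⟩
  · exact tendsto_atTop_mono' _
      ((eventually_gt_atTop 0).mono fun t ht => (bounds t ht).1.le) h
  · exact tendsto_atTop_mono' _
      ((eventually_gt_atTop 0).mono fun t ht => (bounds t ht).2.le) (h.const_mul_atTop hk)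
end

section
/- Let g: (0,∞) → (0,∞) be continuous with g(2t)/√(g(t)) → k as t → ∞, for some 0 < k < ∞. Then g(t) → k² as t → ∞. -/
/-!
Taking logarithms, `L = log ∘ g` satisfies `L (2t) - L t / 2 → log k`, so after subtracting the
constant `2 log k` one is reduced to the contraction `L (2t) = L t / 2 + o(1)`. Iterating it
`n` times from a point of `[T, 2T]`, where `L` is bounded by continuity, gives
`|L (2ⁿ t)| ≤ 2⁻ⁿ M + O(ε)`, and every large `s` is of the form `2ⁿ t` with such `t`.
-/

open Filter Real Set Topology

theorem abs_comp_pow_mul_le {L : ℝ → ℝ} {c r δ T t : ℝ} (hc : 1 ≤ c) (hT : 0 ≤ T)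
    (hr₀ : 0 ≤ r) (hr₁ : r < 1) (hδ : 0 ≤ δ)
    (hstep : ∀ t, T ≤ t → |L (c * t)| ≤ r * |L t| + δ) (ht : T ≤ t) (n : ℕ) :
    |L (c ^ n * t)| ≤ r ^ n * |L t| + δ / (1 - r) := by
  have hr : 0 < 1 - r := sub_pos.2 hr₁
  induction n with
  | zero => simpa using div_nonneg hδ hr.le
  | succ n ih =>
    have hle : T ≤ c ^ n * t := ht.trans (le_mul_of_one_le_left (hT.trans ht) (one_le_pow₀ hc))
    calc |L (c ^ (n + 1) * t)| = |L (c * (c ^ n * t))| := by rw [pow_succ, mul_comm _ c, mul_assoc]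
      _ ≤ r * |L (c ^ n * t)| + δ := hstep _ hle
      _ ≤ r * (r ^ n * |L t| + δ / (1 - r)) + δ := by gcongr
      _ = r ^ (n + 1) * |L t| + δ / (1 - r) := by field_simp; ring

theorem exists_pow_mul_eq_of_pow_mul_le {c T s : ℝ} {N : ℕ} (hc : 1 < c) (hT : 0 < T)
    (hs : c ^ N * T ≤ s) : ∃ n, N ≤ n ∧ ∃ t ∈ Ico T (c * T), c ^ n * t = s := by
  have hsT : c ^ N ≤ s / T := (le_div_iff₀ hT).2 hs
  obtain ⟨n, hn, hn'⟩ := exists_nat_pow_near ((one_le_pow₀ hc.le).trans hsT) hc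
  have hcn : 0 < c ^ n := pow_pos (zero_lt_one.trans hc) n
  refine ⟨n, Nat.lt_succ_iff.1 ((pow_lt_pow_iff_right₀ hc).1 (hsT.trans_lt hn')), s / c ^ n,
    ⟨?_, ?_⟩, by field_simp⟩
  · rw [le_div_iff₀ hcn, mul_comm]
    exact (le_div_iff₀ hT).1 hn
  · rw [div_lt_iff₀ hcn, mul_assoc, mul_comm T, ← mul_assoc, ← pow_succ']
    exact (div_lt_iff₀ hT).1 hn'

theorem tendsto_zero_of_tendsto_comp_mul_sub_mul {L : ℝ → ℝ} {c a : ℝ} (hc : 1 < c)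
    (ha : |a| < 1) (hL : ContinuousOn L (Ioi 0))
    (h : Tendsto (fun t => L (c * t) - a * L t) atTop (𝓝 0)) :
    Tendsto L atTop (𝓝 0) := by
  rw [Metric.tendsto_atTop]
  intro ε hε
  have hr : 0 < 1 - |a| := sub_pos.2 ha
  set δ := ε * (1 - |a|) / 2 with hδ
  have hδε : δ / (1 - |a|) = ε / 2 := by rw [hδ]; field_simp
  obtain ⟨T₀, hT₀⟩ := Metric.tendsto_atTop.1 h δ (by positivity)
  set T := max T₀ 1
  have hT : 0 < T := zero_lt_one.trans_le (le_max_right _ _)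
  have hstep : ∀ t, T ≤ t → |L (c * t)| ≤ |a| * |L t| + δ := fun t ht => by
    have hsmall := hT₀ t ((le_max_left _ _).trans ht)
    rw [Real.dist_eq, sub_zero] at hsmall
    have := abs_sub_abs_le_abs_sub (L (c * t)) (a * L t)
    rw [abs_mul] at this
    linarith
  obtain ⟨M, hM⟩ := isCompact_Icc.exists_bound_of_continuousOn
    (hL.mono fun x (hx : x ∈ Icc T (c * T)) => hT.trans_le hx.1)
  obtain ⟨N, hN⟩ : ∃ N : ℕ, |a| ^ N * M < ε / 2 := by
    have := (tendsto_pow_atTop_nhds_zero_of_lt_one (abs_nonneg a) ha).mul_const M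
    rw [zero_mul] at this
    exact (this.eventually (gt_mem_nhds (half_pos hε))).exists
  refine ⟨c ^ N * T, fun s hs => ?_⟩
  obtain ⟨n, hNn, t, ht, rfl⟩ := exists_pow_mul_eq_of_pow_mul_le hc hT hs
  have hLt : |L t| ≤ M := hM t (Ico_subset_Icc_self ht)
  have hpow : |a| ^ n ≤ |a| ^ N := pow_le_pow_of_le_one (abs_nonneg a) ha.le hNn
  rw [Real.dist_eq, sub_zero]
  calc |L (c ^ n * t)| ≤ |a| ^ n * |L t| + δ / (1 - |a|) :=
        abs_comp_pow_mul_le hc.le hT.le (abs_nonneg a) ha (by positivity) hstep ht.1 n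
    _ ≤ |a| ^ N * M + ε / 2 := by
        rw [hδε]; gcongr
    _ < ε := by linarith

theorem tendsto_of_tendsto_comp_mul_sub_mul {L : ℝ → ℝ} {c a b : ℝ} (hc : 1 < c)
    (ha : |a| < 1) (hL : ContinuousOn L (Ioi 0))
    (h : Tendsto (fun t => L (c * t) - a * L t) atTop (𝓝 b)) :
    Tendsto L atTop (𝓝 (b / (1 - a))) := by
  have ha' : 1 - a ≠ 0 := by linarith [le_abs_self a]
  have hshift : Tendsto (fun t => L t - b / (1 - a)) atTop (𝓝 0) := by
    refine tendsto_zero_of_tendsto_comp_mul_sub_mul hc ha (hL.sub continuousOn_const) ?_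
    rw [← sub_self b]
    refine (h.sub_const b).congr fun t => ?_
    field_simp
    ring
  simpa using hshift.add_const (b / (1 - a))

theorem stmt_10 (g : ℝ → ℝ) (k : ℝ) (hk : 0 < k)
    (hcont : ContinuousOn g (Set.Ioi (0 : ℝ)))
    (hpos : ∀ t : ℝ, 0 < t → 0 < g t)
    (hlim : Filter.Tendsto (fun t => g (2 * t) / Real.sqrt (g t))
      Filter.atTop (nhds k)) :
    Filter.Tendsto g Filter.atTop (nhds (k ^ 2)) := by
  have hlog : Tendsto (fun t => log (g (2 * t)) - 1 / 2 * log (g t)) atTop (𝓝 (log k)) := by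
    refine ((continuousAt_log hk.ne').tendsto.comp hlim).congr' ?_
    filter_upwards [eventually_gt_atTop 0] with t ht
    have hg : 0 < g t := hpos t ht
    rw [Function.comp_apply, log_div (hpos _ (by positivity)).ne' (sqrt_pos.2 hg).ne',
      log_sqrt hg.le]
    ring
  have hlogg := tendsto_of_tendsto_comp_mul_sub_mul one_lt_two (by norm_num [abs_of_pos])
    (hcont.log fun t ht => (hpos t ht).ne') hlog
  have hk2 : log k / (1 - 1 / 2) = log (k ^ 2) := by rw [log_pow]; push_cast; ring
  rw [hk2] at hlogg
  rw [← exp_log (pow_pos hk 2)]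
  refine ((continuous_exp.tendsto _).comp hlogg).congr' ?_
  filter_upwards [eventually_gt_atTop 0] with t ht
  exact exp_log (hpos t ht)
end

section
/- Define Φ_r(t) = ∑_j e^{-t p_j}(t p_j)^r/r! and m_j = #{l : 2^{-(j+1)} < p_l ≤ 2^{-j}}. If sup_j m_j = m* < ∞, then for every s ≥ 1, sup_{t>0} Φ_s(t) < ∞; more precisely for 2^j ≤ t < 2^{j+1}, s! Φ_s(t) ≤ m*(2 + 2^s ∑_{l≥0} 2^{ls} e^{-2^{l-1}}). -/
/-- Number of frequencies in the dyadic band `(2^{-(j+1)}, 2^{-j}]`. -/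
noncomputable def dyadicCount (p : ℕ → ℝ) (j : ℕ) : ℕ :=
  Set.ncard {l : ℕ | 1 / (2 : ℝ) ^ (j + 1) < p l ∧ p l ≤ 1 / (2 : ℝ) ^ j}

/-!
With `f(x) = e^{-x} x^s` we have `s! Φ_s(t) = ∑_l f(t p_l)`. Let `2^j ≤ t < 2^{j+1}` and let `p_l`
lie in the dyadic band `k`. If `k ≤ j` then `t p_l ∈ (2^{j-k}/2, 2^{j-k+1})`, where
`f ≤ 2^s 2^{(j-k)s} e^{-2^{j-k}/2}`; if `k > j` then `t p_l ≤ 2^{j+1-k} ≤ 1`, and `f(x) ≤ x` gives a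
geometric bound. Each band holds at most `m*` indices, so summing the band bounds over `k` gives the
estimate. For `t < 1` simply `∑ f(t p_l) ≤ ∑ t p_l = t`.
-/

open Real Finset Nat

lemma exp_neg_mul_pow_le_self {x : ℝ} (hx0 : 0 ≤ x) (hx1 : x ≤ 1) {s : ℕ} (hs : 1 ≤ s) :
    exp (-x) * x ^ s ≤ x :=
  calc exp (-x) * x ^ s ≤ 1 * x ^ 1 := by
        gcongr ?_ * ?_
        · exact exp_le_one_iff.mpr (by linarith)
        · exact pow_le_pow_of_le_one hx0 hx1 hs
    _ = x := by ring

lemma exp_neg_mul_pow_le_of_le_of_le {a x : ℝ} (ha : 0 ≤ a) (hax : a ≤ x) (hxa : x ≤ 4 * a)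
    (s : ℕ) : exp (-x) * x ^ s ≤ exp (-a) * (4 * a) ^ s := by
  have hx : 0 ≤ x := ha.trans hax
  gcongr

lemma pow_mul_exp_neg_le {x : ℝ} (hx : 0 < x) (n : ℕ) :
    x ^ n * exp (-x) ≤ ((n + 1)! : ℝ) / x := by
  have h := pow_div_factorial_le_exp x hx.le (n + 1)
  rw [exp_neg, ← div_eq_mul_inv, div_le_div_iff₀ (exp_pos x) hx]
  rw [div_le_iff₀ (by positivity)] at h
  calc x ^ n * x = x ^ (n + 1) := by ring
    _ ≤ _ := by linarith

lemma summable_two_pow_mul_exp_neg_two_pow (s : ℕ) :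
    Summable fun l : ℕ => (2 : ℝ) ^ (l * s) * exp (-((2 : ℝ) ^ l / 2)) := by
  refine .of_nonneg_of_le (fun l => by positivity) (fun l => ?_)
    (summable_geometric_two.mul_left (2 ^ s * ((s + 1)! : ℝ) * 2))
  have hy : (0 : ℝ) < 2 ^ l / 2 := by positivity
  have hpow : (2 : ℝ) ^ (l * s) = 2 ^ s * (2 ^ l / 2) ^ s := by
    rw [div_pow, pow_mul]; field_simp
  calc (2 : ℝ) ^ (l * s) * exp (-(2 ^ l / 2))
      = 2 ^ s * ((2 ^ l / 2) ^ s * exp (-(2 ^ l / 2))) := by rw [hpow, mul_assoc]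
    _ ≤ 2 ^ s * ((s + 1)! / (2 ^ l / 2)) := by gcongr; exact pow_mul_exp_neg_le hy s
    _ = 2 ^ s * (s + 1)! * 2 * (1 / 2) ^ l := by
      rw [one_div_pow]; field_simp

lemma tsum_le_mul_tsum_of_encard_fiber_le {ι κ : Type*} {g : ι → ℝ} {b : κ → ℝ} (K : ι → κ)
    {m : ℕ} (hgb : ∀ i, g i ≤ b (K i)) (hb : ∀ k, 0 ≤ b k) (hbs : Summable b)
    (hK : ∀ k, {i | K i = k}.encard ≤ m) :
    ∑' i, g i ≤ m * ∑' k, b k := by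
  classical
  refine tsum_le_of_sum_le' (mul_nonneg m.cast_nonneg (tsum_nonneg hb)) fun F => ?_
  have hfiber : ∀ k, (#{i ∈ F | K i = k} : ℝ) ≤ m := fun k => by
    have : (#{i ∈ F | K i = k} : ℕ∞) ≤ m := by
      rw [← Set.encard_coe_eq_coe_finsetCard]
      exact (Set.encard_le_encard fun i hi => (Finset.mem_filter.mp hi).2).trans (hK k)
    exact_mod_cast this
  calc ∑ i ∈ F, g i ≤ ∑ i ∈ F, b (K i) := sum_le_sum fun i _ => hgb i
    _ = ∑ k ∈ F.image K, #{i ∈ F | K i = k} • b k := sum_comp b K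
    _ ≤ ∑ k ∈ F.image K, m * b k := sum_le_sum fun k _ => by
        rw [nsmul_eq_mul]; exact mul_le_mul_of_nonneg_right (hfiber k) (hb k)
    _ ≤ m * ∑' k, b k := by
        rw [← mul_sum]; gcongr; exact hbs.sum_le_tsum _ fun k _ => hb k

lemma exists_mem_dyadic_band {x : ℝ} (hx0 : 0 < x) (hx1 : x ≤ 1) :
    ∃ k : ℕ, 1 / (2 : ℝ) ^ (k + 1) < x ∧ x ≤ 1 / (2 : ℝ) ^ k := by
  obtain ⟨k, hk, hk'⟩ := exists_nat_pow_near (one_le_one_div hx0 hx1) one_lt_two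
  refine ⟨k, ?_, ?_⟩
  · rwa [div_lt_iff₀ (by positivity), mul_comm, ← div_lt_iff₀ hx0]
  · rwa [le_div_iff₀ (by positivity), mul_comm, ← le_div_iff₀ hx0]

lemma encard_dyadic_band_le {p : ℕ → ℝ} (hps : Summable p) {m : ℕ}
    (hm : ∀ j, dyadicCount p j ≤ m) (k : ℕ) :
    {l | 1 / (2 : ℝ) ^ (k + 1) < p l ∧ p l ≤ 1 / (2 : ℝ) ^ k}.encard ≤ m := by
  have hfin : {l | 1 / (2 : ℝ) ^ (k + 1) ≤ p l}.Finite := by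
    simpa using Filter.eventually_cofinite.mp
      (hps.tendsto_cofinite_zero.eventually
        (gt_mem_nhds (one_div_pos.mpr (pow_pos two_pos (k + 1)))))
  rw [← (hfin.subset fun l hl => hl.1.le).cast_ncard_eq]
  exact Nat.cast_le.mpr (hm k)

noncomputable def dyadicLevelBound (s j k : ℕ) : ℝ :=
  if k ≤ j then 2 ^ s * ((2 : ℝ) ^ ((j - k) * s) * exp (-((2 : ℝ) ^ (j - k) / 2)))
  else (1 / 2) ^ (k - (j + 1))

lemma dyadicLevelBound_nonneg (s j k : ℕ) : 0 ≤ dyadicLevelBound s j k := by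
  unfold dyadicLevelBound; split_ifs <;> positivity

lemma dyadicLevelBound_add (s j i : ℕ) : dyadicLevelBound s j (i + (j + 1)) = (1 / 2) ^ i := by
  rw [dyadicLevelBound, if_neg (by omega), Nat.add_sub_cancel]

lemma summable_dyadicLevelBound (s j : ℕ) : Summable (dyadicLevelBound s j) :=
  (summable_nat_add_iff (j + 1)).mp <| by
    simpa only [dyadicLevelBound_add] using summable_geometric_two

lemma tsum_dyadicLevelBound_le (s j : ℕ) :
    ∑' k, dyadicLevelBound s j k ≤
      2 + 2 ^ s * ∑' l : ℕ, (2 : ℝ) ^ (l * s) * exp (-((2 : ℝ) ^ l / 2)) := by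
  rw [← (summable_dyadicLevelBound s j).sum_add_tsum_nat_add (j + 1)]
  simp only [dyadicLevelBound_add, tsum_geometric_two]
  have hhead : ∑ k ∈ range (j + 1), dyadicLevelBound s j k =
      2 ^ s * ∑ l ∈ range (j + 1), (2 : ℝ) ^ (l * s) * exp (-((2 : ℝ) ^ l / 2)) := by
    rw [mul_sum, ← sum_range_reflect]
    refine sum_congr rfl fun k hk => ?_
    rw [mem_range] at hk
    simp [dyadicLevelBound, Nat.sub_sub_self (Nat.le_of_lt_succ hk)]
  rw [hhead, add_comm]
  gcongr
  exact (summable_two_pow_mul_exp_neg_two_pow s).sum_le_tsum _ fun l _ => by positivity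

lemma exp_neg_mul_pow_le_dyadicLevelBound {s j k : ℕ} (hs : 1 ≤ s) {t x : ℝ}
    (ht : 2 ^ j ≤ t) (ht' : t < 2 ^ (j + 1))
    (hx : 1 / (2 : ℝ) ^ (k + 1) < x) (hx' : x ≤ 1 / (2 : ℝ) ^ k) :
    exp (-(t * x)) * (t * x) ^ s ≤ dyadicLevelBound s j k := by
  have hx0 : 0 < x := (one_div_pos.mpr (by positivity)).trans hx
  have ht0 : 0 < t := (by positivity : (0 : ℝ) < 2 ^ j).trans_le ht
  have hupper : t * x ≤ 2 ^ (j + 1) * (1 / 2 ^ k) := by gcongr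
  unfold dyadicLevelBound
  split_ifs with hkj
  · obtain ⟨i, rfl⟩ := Nat.exists_eq_add_of_le hkj
    have hlower : (2 : ℝ) ^ i / 2 ≤ t * x :=
      calc (2 : ℝ) ^ i / 2 = 2 ^ (k + i) * (1 / 2 ^ (k + 1)) := by field_simp; ring
        _ ≤ t * x := by gcongr
    have hupper' : t * x ≤ 4 * (2 ^ i / 2) :=
      hupper.trans_eq (by field_simp; ring)
    calc exp (-(t * x)) * (t * x) ^ s ≤ exp (-(2 ^ i / 2)) * (4 * (2 ^ i / 2)) ^ s :=
          exp_neg_mul_pow_le_of_le_of_le (by positivity) hlower hupper' s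
      _ = _ := by
          rw [Nat.add_sub_cancel_left, pow_mul, show (4 : ℝ) * (2 ^ i / 2) = 2 * 2 ^ i by ring,
            mul_pow]
          ring
  · obtain ⟨i, rfl⟩ := Nat.exists_eq_add_of_lt (not_le.mp hkj)
    have hsmall : t * x ≤ (1 / 2) ^ i := hupper.trans_eq (by rw [one_div_pow]; field_simp; ring)
    rw [show j + i + 1 - (j + 1) = i by omega]
    exact (exp_neg_mul_pow_le_self (by positivity)
      (hsmall.trans (pow_le_one₀ (by norm_num) (by norm_num))) hs).trans hsmall

lemma factorial_mul_Phi (p : ℕ → ℝ) (r : ℕ) (t : ℝ) :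
    (r ! : ℝ) * Phi p r t = ∑' l, exp (-(t * p l)) * (t * p l) ^ r := by
  rw [Phi, tsum_div_const, mul_div_cancel₀ _ (by positivity)]

lemma factorial_mul_Phi_le_of_le_one {p : ℕ → ℝ} (hp : ∀ l, 0 ≤ p l) (hps : Summable p)
    {s : ℕ} (hs : 1 ≤ s) {t : ℝ} (ht : 0 ≤ t) (htp : ∀ l, t * p l ≤ 1) :
    (s ! : ℝ) * Phi p s t ≤ t * ∑' l, p l := by
  have hle : ∀ l, exp (-(t * p l)) * (t * p l) ^ s ≤ t * p l := fun l =>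
    exp_neg_mul_pow_le_self (mul_nonneg ht (hp l)) (htp l) hs
  rw [factorial_mul_Phi, ← tsum_mul_left]
  exact Summable.tsum_le_tsum hle
    (.of_nonneg_of_le (fun l => by have := hp l; positivity) hle (hps.mul_left t)) (hps.mul_left t)

lemma factorial_mul_Phi_le_of_two_pow_le {p : ℕ → ℝ} (hp : ∀ l, 0 < p l) (hp1 : ∀ l, p l ≤ 1)
    (hps : Summable p) {m : ℕ} (hm : ∀ j, dyadicCount p j ≤ m) {s j : ℕ} (hs : 1 ≤ s) {t : ℝ}
    (ht : 2 ^ j ≤ t) (ht' : t < 2 ^ (j + 1)) :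
    (s ! : ℝ) * Phi p s t ≤
      m * (2 + 2 ^ s * ∑' l : ℕ, (2 : ℝ) ^ (l * s) * exp (-((2 : ℝ) ^ l / 2))) := by
  choose K hK using fun l => exists_mem_dyadic_band (hp l) (hp1 l)
  rw [factorial_mul_Phi]
  calc ∑' l, exp (-(t * p l)) * (t * p l) ^ s ≤ m * ∑' k, dyadicLevelBound s j k :=
        tsum_le_mul_tsum_of_encard_fiber_le K
          (fun l => exp_neg_mul_pow_le_dyadicLevelBound hs ht ht' (hK l).1 (hK l).2)
          (dyadicLevelBound_nonneg s j) (summable_dyadicLevelBound s j) fun k =>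
            (Set.encard_le_encard fun l hl => hl ▸ hK l).trans (encard_dyadic_band_le hps hm k)
    _ ≤ _ := by gcongr; exact tsum_dyadicLevelBound_le s j

theorem stmt_11_general (p : ℕ → ℝ) (hp : ∀ j, 0 < p j)
    (hsum : ∑' j : ℕ, p j = 1)
    (mstar : ℕ) (hm : ∀ j, dyadicCount p j ≤ mstar) :
    (∀ s : ℕ, 1 ≤ s → ∀ j : ℕ, ∀ t : ℝ,
      (2 : ℝ) ^ j ≤ t → t < (2 : ℝ) ^ (j + 1) →
      (s.factorial : ℝ) * Phi p s t ≤
        (mstar : ℝ) * (2 + 2 ^ s * ∑' l : ℕ, (2 : ℝ) ^ (l * s) *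
          Real.exp (-((2 : ℝ) ^ l / 2)))) ∧
    (∀ s : ℕ, 1 ≤ s → ∃ M : ℝ, ∀ t : ℝ, 0 < t → Phi p s t ≤ M) := by
  have hps : Summable p := by
    by_contra h
    simp [tsum_eq_zero_of_not_summable h] at hsum
  have hp1 : ∀ l, p l ≤ 1 := fun l => hsum ▸ hps.le_tsum l fun k _ => (hp k).le
  refine ⟨fun s hs j t ht ht' => factorial_mul_Phi_le_of_two_pow_le hp hp1 hps hm hs ht ht',
    fun s hs => ⟨max (mstar * (2 + 2 ^ s * ∑' l : ℕ, (2 : ℝ) ^ (l * s) *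
      exp (-((2 : ℝ) ^ l / 2)))) 1 / s !, fun t ht0 => ?_⟩⟩
  rw [le_div_iff₀ (by positivity), mul_comm]
  rcases le_or_gt 1 t with ht1 | ht1
  · obtain ⟨j, hj, hj'⟩ := exists_nat_pow_near ht1 one_lt_two
    exact (factorial_mul_Phi_le_of_two_pow_le hp hp1 hps hm hs hj hj').trans (le_max_left _ _)
  · have htp : ∀ l, t * p l ≤ 1 := fun l => by nlinarith [hp l, hp1 l]
    calc (s ! : ℝ) * Phi p s t ≤ t * ∑' l, p l :=
          factorial_mul_Phi_le_of_le_one (fun l => (hp l).le) hps hs ht0.le htp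
      _ ≤ max _ 1 := by rw [hsum, mul_one]; exact ht1.le.trans (le_max_right _ _)

theorem stmt_11 (p : ℕ → ℝ) (hp : ∀ j, 0 < p j) (hdec : ∀ j, p (j + 1) ≤ p j)
    (hsum : ∑' j : ℕ, p j = 1)
    (mstar : ℕ) (hm : ∀ j, dyadicCount p j ≤ mstar) :
    (∀ s : ℕ, 1 ≤ s → ∀ j : ℕ, ∀ t : ℝ,
      (2 : ℝ) ^ j ≤ t → t < (2 : ℝ) ^ (j + 1) →
      (s.factorial : ℝ) * Phi p s t ≤
        (mstar : ℝ) * (2 + 2 ^ s * ∑' l : ℕ, (2 : ℝ) ^ (l * s) *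
          Real.exp (-((2 : ℝ) ^ l / 2)))) ∧
    (∀ s : ℕ, 1 ≤ s → ∃ M : ℝ, ∀ t : ℝ, 0 < t → Phi p s t ≤ M) :=
  stmt_11_general p hp hsum mstar hm
end

section
/- If sup_j m_j = ∞ where m_j = #{l : 2^{-(j+1)} < p_l ≤ 2^{-j}}, then for every j₀ there exists j ≥ j₀ such that m_k ≤ m_j for all 0 ≤ k ≤ j and m_k ≤ 3^{k-j} m_j for all k ≥ j. -/
/-! Put `C` above every count `m k` with `k < j₀` and let `j` maximise the frequency
`m j / 2 ^ (j + 1)` among the indices with `C ≤ m j`; the maximum exists because the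
frequencies are summable, hence tend to `0`, and there is such an index because `m` is unbounded.
Comparing frequencies, `m k ≤ m j` for `k ≤ j` and `m k ≤ 2 ^ (k - j) * m j` for `k ≥ j`,
while the indices with `m k < C ≤ m j` satisfy both bounds trivially. -/

open Filter Topology

lemma exists_max_of_tendsto_cofinite_zero {α : Type*} {g : α → ℝ} (hg : Tendsto g cofinite (𝓝 0))
    {S : Set α} {n : α} (hn : n ∈ S) (hpos : 0 < g n) : ∃ j ∈ S, ∀ k ∈ S, g k ≤ g j := by
  have hfin : {k | g n ≤ g k}.Finite := by
    simpa using hg.eventually (gt_mem_nhds hpos)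
  obtain ⟨j, ⟨hjS, hnj⟩, hjmax⟩ :=
    Set.exists_max_image _ g (hfin.inter_of_right S) ⟨n, hn, le_refl (g n)⟩
  refine ⟨j, hjS, fun k hk => ?_⟩
  rcases le_or_gt (g n) (g k) with hnk | hkn
  · exact hjmax k ⟨hk, hnk⟩
  · exact hkn.le.trans hnj

lemma le_of_div_two_pow_le {a b : ℝ} {i j : ℕ} (hb : 0 ≤ b) (hij : i ≤ j)
    (h : a / 2 ^ (i + 1) ≤ b / 2 ^ (j + 1)) : a ≤ b := by
  have hpow : (2 : ℝ) ^ (i + 1) ≤ 2 ^ (j + 1) := pow_le_pow_right₀ one_le_two (by omega)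
  rw [div_le_div_iff₀ (by positivity) (by positivity)] at h
  exact le_of_mul_le_mul_right (h.trans (mul_le_mul_of_nonneg_left hpow hb)) (by positivity)

lemma le_two_pow_sub_mul_of_div_two_pow_le {a b : ℝ} {i j : ℕ} (hji : j ≤ i)
    (h : a / 2 ^ (i + 1) ≤ b / 2 ^ (j + 1)) : a ≤ 2 ^ (i - j) * b := by
  have hpow : (2 : ℝ) ^ (i + 1) = 2 ^ (i - j) * 2 ^ (j + 1) := by
    rw [← pow_add]; congr 1; omega
  rwa [hpow, ← div_div, div_le_div_iff_of_pos_right (by positivity),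
    div_le_iff₀' (by positivity)] at h

lemma exists_max_freq_among_count_ge (m : ℕ → ℕ)
    (hsum : ∀ n : ℕ, ∑ j ∈ Finset.range n, (m j : ℝ) / 2 ^ (j + 1) ≤ 1)
    (hsup : ∀ N : ℕ, ∃ j : ℕ, N ≤ m j) {C : ℕ} (hC : 0 < C) :
    ∃ j, C ≤ m j ∧ ∀ k, C ≤ m k → (m k : ℝ) / 2 ^ (k + 1) ≤ m j / 2 ^ (j + 1) := by
  have hg : Tendsto (fun k => (m k : ℝ) / 2 ^ (k + 1)) cofinite (𝓝 0) :=
    (summable_of_sum_range_le (fun _ => by positivity) hsum).tendsto_cofinite_zero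
  obtain ⟨n, hn⟩ := hsup C
  have hpos : (0 : ℝ) < m n / 2 ^ (n + 1) := by
    have : 0 < m n := hC.trans_le hn
    positivity
  exact exists_max_of_tendsto_cofinite_zero hg (S := {k | C ≤ m k}) hn hpos

theorem stmt_12 (m : ℕ → ℕ)
    (hsum : ∀ n : ℕ, ∑ j ∈ Finset.range n, (m j : ℝ) / 2 ^ (j + 1) ≤ 1)
    (hsup : ∀ N : ℕ, ∃ j : ℕ, N ≤ m j) :
    ∀ j₀ : ℕ, ∃ j : ℕ, j₀ ≤ j ∧
      (∀ k : ℕ, k ≤ j → m k ≤ m j) ∧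
      (∀ k : ℕ, j ≤ k → (m k : ℝ) ≤ 3 ^ (k - j) * m j) := by
  intro j₀
  set C := (Finset.range j₀).sup m + 1
  have hbelow : ∀ k < j₀, m k < C := fun k hk =>
    Nat.lt_succ_of_le (Finset.le_sup (Finset.mem_range.mpr hk))
  obtain ⟨j, hCj, hjmax⟩ := exists_max_freq_among_count_ge m hsum hsup (C := C) (Nat.succ_pos _)
  refine ⟨j, not_lt.mp fun h => (hbelow j h).not_ge hCj, fun k hk => ?_, fun k hk => ?_⟩
  · rcases lt_or_ge (m k) C with hkC | hkC
    · omega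
    · exact_mod_cast le_of_div_two_pow_le (Nat.cast_nonneg _) hk (hjmax k hkC)
  · rcases lt_or_ge (m k) C with hkC | hkC
    · have hkj : (m k : ℝ) ≤ m j := by exact_mod_cast (hkC.trans_le hCj).le
      exact hkj.trans (le_mul_of_one_le_left (Nat.cast_nonneg _) (one_le_pow₀ (by norm_num)))
    · calc (m k : ℝ) ≤ 2 ^ (k - j) * m j := le_two_pow_sub_mul_of_div_two_pow_le hk (hjmax k hkC)
        _ ≤ 3 ^ (k - j) * m j := by gcongr; norm_num
end

section
/- Define ρ_{j,r} = p_j^{-r} ∑_{i>j} p_i^r. Then for p_{j+1} ≤ x < p_j (with ν_r[0,x] = ∑_{i : p_i ≤ x} p_i^r): ρ_{j,r} = ν_r[0,p_{j+1}]/p_j^r < ν_r[0,x]/x^r ≤ 1 + ρ_{j+1,r}. Consequently liminf_{j→∞} ρ_{j,r} ≤ liminf_{t→∞} Φ_r(t) ≤ limsup_{t→∞} Φ_r(t) ≤ 1 + limsup_{j→∞} ρ_{j,r}. -/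
/-- `ν_r[0,x] = ∑_{i : p_i ≤ x} p_i^r`. -/
noncomputable def nuMass (p : ℕ → ℝ) (r : ℕ) (x : ℝ) : ℝ :=
  ∑' i : ℕ, if p i ≤ x then p i ^ r else 0

/-- `ρ_{j,r} = p_j^{-r} ∑_{i > j} p_i^r`. -/
noncomputable def rho (p : ℕ → ℝ) (r j : ℕ) : ℝ :=
  (∑' i : ℕ, if j < i then p i ^ r else 0) / p j ^ r

/-!
For `p (j+1) ≤ x < p j` the atoms of `ν_r` in `[0, x]` are exactly the `p i` with `i > j`, so
`ν_r[0,x]` is the tail `∑_{i>j} p_i^r`; dividing by `x^r` and moving `x` across the interval gives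
the bracket `ρ_{j,r} < ν_r[0,x]/x^r ≤ 1 + ρ_{j+1,r}`.

By Abel summation `Φ_r(t) = t^{r+1}/r! ∫₀^∞ e^{-ts} ν_r[0,s] ds`, and the kernel
`t^{r+1} s^r e^{-ts}/r!` is a probability density on `(0, ∞)` concentrating at `0` as `t → ∞`.
Hence a bound `c s^r ≤ ν_r[0,s]` (resp. `ν_r[0,s] ≤ C s^r`) for small `s`, which the bracket
provides as soon as `c ≤ ρ_{j,r}` (resp. `1 + ρ_{j,r} ≤ C`) for all large `j`, passes to
`Φ_r(t)` up to an error vanishing as `t → ∞`.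
-/

open Filter MeasureTheory Set Real
open scoped Nat Topology

lemma summable_of_tsum_ne_zero {ι : Type*} {f : ι → ℝ} (h : ∑' i, f i ≠ 0) : Summable f := by
  by_contra hf
  exact h (tsum_eq_zero_of_not_summable hf)

lemma tsum_ite_lt_eq_add {f : ℕ → ℝ} (hf : Summable f) (j : ℕ) :
    (∑' i, if j < i then f i else 0) = f (j + 1) + ∑' i, if j + 1 < i then f i else 0 := by
  have hs : Summable fun i => if j < i then f i else 0 :=
    (hf.indicator (Ioi j)).congr fun i => by simp [Set.indicator_apply]
  rw [hs.tsum_eq_add_tsum_ite (j + 1), if_pos j.lt_succ_self]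
  congr 1
  refine tsum_congr fun i => ?_
  split_ifs <;> first | rfl | omega

lemma exists_le_lt_of_tendsto_zero {p : ℕ → ℝ} (hdec : Antitone p)
    (hlim : Tendsto p atTop (𝓝 0)) {J : ℕ} {x : ℝ} (hx : 0 < x) (hxJ : x < p J) :
    ∃ j, J ≤ j ∧ p (j + 1) ≤ x ∧ x < p j := by
  classical
  have hex : ∃ k, p k ≤ x := (hlim.eventually (gt_mem_nhds hx)).exists.imp fun _ => le_of_lt
  have hJk : J < Nat.find hex := by
    by_contra! h
    exact ((hdec h).trans (Nat.find_spec hex)).not_gt hxJ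
  refine ⟨Nat.find hex - 1, by omega, ?_, ?_⟩
  · rw [Nat.sub_add_cancel (by omega)]
    exact Nat.find_spec hex
  · exact not_le.mp (Nat.find_min hex (by omega))

section Frequencies

variable {p : ℕ → ℝ} {r : ℕ}

lemma le_one_of_tsum_eq_one (hp : ∀ j, 0 ≤ p j) (hsum : ∑' j, p j = 1) (j : ℕ) : p j ≤ 1 :=
  hsum ▸ (summable_of_tsum_ne_zero (by simp [hsum])).le_tsum j fun i _ => hp i

lemma summable_pow_of_tsum_eq_one (hp : ∀ j, 0 ≤ p j) (hsum : ∑' j, p j = 1) (hr : 1 ≤ r) :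
    Summable fun i => p i ^ r :=
  (summable_of_tsum_ne_zero (by simp [hsum])).of_nonneg_of_le (fun i => pow_nonneg (hp i) r)
    fun i => pow_le_of_le_one (hp i) (le_one_of_tsum_eq_one hp hsum i) (by omega)

lemma summable_ite_pow (hp : ∀ j, 0 ≤ p j) (hsum : ∑' j, p j = 1) (hr : 1 ≤ r)
    (P : ℕ → Prop) [DecidablePred P] : Summable fun i => if P i then p i ^ r else 0 :=
  (summable_pow_of_tsum_eq_one hp hsum hr).of_nonneg_of_le
    (fun i => by split_ifs; exacts [pow_nonneg (hp i) r, le_rfl])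
    (fun i => by split_ifs; exacts [le_rfl, pow_nonneg (hp i) r])

lemma nuMass_nonneg (hp : ∀ j, 0 ≤ p j) (x : ℝ) : 0 ≤ nuMass p r x :=
  tsum_nonneg fun i => by split_ifs; exacts [pow_nonneg (hp i) r, le_rfl]

lemma nuMass_le_one (hp : ∀ j, 0 ≤ p j) (hsum : ∑' j, p j = 1) (hr : 1 ≤ r) (x : ℝ) :
    nuMass p r x ≤ 1 :=
  calc nuMass p r x ≤ ∑' i, p i ^ r :=
        (summable_ite_pow hp hsum hr _).tsum_le_tsum
          (fun i => by split_ifs; exacts [le_rfl, pow_nonneg (hp i) r])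
          (summable_pow_of_tsum_eq_one hp hsum hr)
    _ ≤ ∑' i, p i := (summable_pow_of_tsum_eq_one hp hsum hr).tsum_le_tsum
          (fun i => pow_le_of_le_one (hp i) (le_one_of_tsum_eq_one hp hsum i) (by omega))
          (summable_of_tsum_ne_zero (by simp [hsum]))
    _ = 1 := hsum

lemma monotone_nuMass (hp : ∀ j, 0 ≤ p j) (hsum : ∑' j, p j = 1) (hr : 1 ≤ r) :
    Monotone (nuMass p r) := fun x y hxy =>
  (summable_ite_pow hp hsum hr _).tsum_le_tsum
    (fun i => by split_ifs with h h' <;> first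
      | exact le_rfl | exact pow_nonneg (hp i) r | exact absurd (h.trans hxy) h')
    (summable_ite_pow hp hsum hr _)

lemma rho_nonneg (hp : ∀ j, 0 ≤ p j) (j : ℕ) : 0 ≤ rho p r j :=
  div_nonneg (tsum_nonneg fun i => by split_ifs; exacts [pow_nonneg (hp i) r, le_rfl])
    (pow_nonneg (hp j) r)

lemma nuMass_eq_tsum_of_le_of_lt (hdec : Antitone p) {j : ℕ} {x : ℝ} (h1 : p (j + 1) ≤ x)
    (h2 : x < p j) : nuMass p r x = ∑' i, if j < i then p i ^ r else 0 := by
  refine tsum_congr fun i => if_congr ⟨fun hi => ?_, fun hi => (hdec hi).trans h1⟩ rfl rfl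
  by_contra! hij
  exact ((hdec hij).trans hi).not_gt h2

lemma nuMass_div_pow_bounds (hp : ∀ j, 0 < p j) (hdec : Antitone p) (hsum : ∑' j, p j = 1)
    (hr : 1 ≤ r) {j : ℕ} {x : ℝ} (h1 : p (j + 1) ≤ x) (h2 : x < p j) :
    rho p r j = nuMass p r (p (j + 1)) / p j ^ r ∧
      nuMass p r (p (j + 1)) / p j ^ r < nuMass p r x / x ^ r ∧
      nuMass p r x / x ^ r ≤ 1 + rho p r (j + 1) := by
  have hsplit := tsum_ite_lt_eq_add (summable_pow_of_tsum_eq_one (fun i => (hp i).le) hsum hr) j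
  set S := ∑' i, if j < i then p i ^ r else 0
  have hS : 0 < S := hsplit ▸ add_pos_of_pos_of_nonneg (pow_pos (hp (j + 1)) r)
    (tsum_nonneg fun i => by split_ifs; exacts [pow_nonneg (hp i).le r, le_rfl])
  have hx : 0 < x := (hp (j + 1)).trans_le h1
  have hpj : 0 < p (j + 1) ^ r := pow_pos (hp (j + 1)) r
  rw [nuMass_eq_tsum_of_le_of_lt hdec le_rfl (h1.trans_lt h2),
    nuMass_eq_tsum_of_le_of_lt hdec h1 h2]
  refine ⟨rfl, div_lt_div_of_pos_left hS (pow_pos hx r) (pow_lt_pow_left₀ h2 hx.le (by omega)),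
    ?_⟩
  calc S / x ^ r ≤ S / p (j + 1) ^ r :=
        div_le_div_of_nonneg_left hS.le hpj (pow_le_pow_left₀ (hp _).le h1 r)
    _ = 1 + rho p r (j + 1) := by rw [hsplit, add_div, div_self hpj.ne', rho]

end Frequencies

section GammaIntegrals

variable {t : ℝ}

lemma integral_pow_mul_exp_neg_mul_Ioi (n : ℕ) (ht : 0 < t) :
    ∫ s in Ioi 0, s ^ n * exp (-(t * s)) = n ! / t ^ (n + 1) := by
  have key := integral_rpow_mul_exp_neg_mul_Ioi (a := n + 1) (by positivity) ht
  simp only [add_sub_cancel_right, rpow_natCast] at key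
  rw [key, Gamma_nat_eq_factorial, one_div, inv_rpow ht.le, ← Nat.cast_succ, rpow_natCast,
    inv_mul_eq_div]

lemma integrableOn_pow_mul_exp_neg_mul_Ioi (n : ℕ) (ht : 0 < t) :
    IntegrableOn (fun s => s ^ n * exp (-(t * s))) (Ioi 0) :=
  .of_integral_ne_zero (by rw [integral_pow_mul_exp_neg_mul_Ioi n ht]; positivity)

lemma integrableOn_exp_neg_mul_Ioi (a : ℝ) (ht : 0 < t) :
    IntegrableOn (fun s => exp (-(t * s))) (Ioi a) := by
  simpa only [neg_mul] using exp_neg_integrableOn_Ioi a ht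

lemma integral_indicator_Ici_exp_neg_mul {a : ℝ} (ha : 0 < a) (ht : 0 < t) :
    ∫ s in Ioi 0, (Ici a).indicator (fun s => exp (-(t * s))) s = exp (-(t * a)) / t := by
  rw [setIntegral_indicator measurableSet_Ici,
    inter_eq_self_of_subset_right (Ici_subset_Ioi.2 ha), integral_Ici_eq_integral_Ioi]
  simpa only [neg_mul, neg_div_neg_eq] using integral_exp_mul_Ioi (neg_neg_of_pos ht) a

lemma tendsto_mul_intervalIntegral_pow_mul_exp_neg_mul (n : ℕ) {δ : ℝ} (hδ : 0 < δ) :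
    Tendsto (fun t => t ^ (n + 1) / n ! * ∫ s in (0)..δ, s ^ n * exp (-(t * s)))
      atTop (𝓝 1) := by
  have hlim := (intervalIntegral_tendsto_integral_Ioi 0
    (integrableOn_pow_mul_exp_neg_mul_Ioi n one_pos)
    (tendsto_id.atTop_mul_const hδ)).div_const (n ! : ℝ)
  rw [integral_pow_mul_exp_neg_mul_Ioi n one_pos, one_pow, div_one,
    div_self (by positivity)] at hlim
  refine hlim.congr' ?_
  filter_upwards [eventually_gt_atTop 0] with t ht
  -- substitute `u = t * s`
  have hsub := intervalIntegral.integral_comp_mul_left (fun u => u ^ n * exp (-(1 * u)))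
    ht.ne' (a := 0) (b := δ)
  simp only [mul_zero, id, smul_eq_mul, mul_pow, one_mul, mul_assoc,
    intervalIntegral.integral_const_mul] at hsub ⊢
  rw [eq_inv_mul_iff_mul_eq₀ ht.ne'] at hsub
  rw [← hsub]
  ring

end GammaIntegrals

section LaplaceRepresentation

variable {p : ℕ → ℝ} {r : ℕ} {t : ℝ}

lemma integrableOn_nuMass_mul_exp_neg_mul (hp : ∀ j, 0 ≤ p j) (hsum : ∑' j, p j = 1)
    (hr : 1 ≤ r) (ht : 0 < t) :
    IntegrableOn (fun s => nuMass p r s * exp (-(t * s))) (Ioi 0) := by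
  refine (integrableOn_exp_neg_mul_Ioi 0 ht).mono'
    ((monotone_nuMass hp hsum hr).measurable.mul (by fun_prop)).aestronglyMeasurable
    (.of_forall fun s => ?_)
  rw [norm_of_nonneg (mul_nonneg (nuMass_nonneg hp s) (exp_pos _).le)]
  exact mul_le_of_le_one_left (exp_pos _).le (nuMass_le_one hp hsum hr s)

/-- Abel summation: `e^{-t p_i} = t ∫_{p_i}^∞ e^{-ts} ds`, weighted by `p_i^r` and summed. -/
lemma Phi_eq_integral (hp : ∀ j, 0 < p j) (hsum : ∑' j, p j = 1) (hr : 1 ≤ r) (ht : 0 < t) :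
    Phi p r t = t ^ (r + 1) / r ! * ∫ s in Ioi 0, nuMass p r s * exp (-(t * s)) := by
  set F : ℕ → ℝ → ℝ := fun i s => p i ^ r * (Ici (p i)).indicator (fun s => exp (-(t * s))) s
  have hF : ∀ s, nuMass p r s * exp (-(t * s)) = ∑' i, F i s := fun s => by
    rw [nuMass, ← tsum_mul_right]
    refine tsum_congr fun i => ?_
    by_cases h : p i ≤ s <;> simp [F, h]
  have hFint : ∀ i, ∫ s in Ioi 0, F i s = p i ^ r * (exp (-(t * p i)) / t) := fun i => by
    rw [integral_const_mul, integral_indicator_Ici_exp_neg_mul (hp i) ht]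
  have hFnonneg : ∀ i s, 0 ≤ F i s := fun i s =>
    mul_nonneg (pow_nonneg (hp i).le r) (indicator_nonneg (fun _ _ => (exp_pos _).le) s)
  have hsummable : Summable fun i => ∫ s in Ioi 0, ‖F i s‖ := by
    simp_rw [norm_of_nonneg (hFnonneg _ _), hFint]
    refine ((summable_pow_of_tsum_eq_one (fun j => (hp j).le) hsum hr).mul_right t⁻¹)
      |>.of_nonneg_of_le (fun i => mul_nonneg (pow_nonneg (hp i).le r) (by positivity))
      fun i => ?_
    rw [div_eq_mul_inv]
    exact mul_le_mul_of_nonneg_left (mul_le_of_le_one_left (inv_pos.2 ht).le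
      (exp_le_one_iff.2 (neg_nonpos.2 (mul_nonneg ht.le (hp i).le)))) (pow_nonneg (hp i).le r)
  have hswap := integral_tsum_of_summable_integral_norm
    (fun i => ((integrableOn_exp_neg_mul_Ioi 0 ht).indicator measurableSet_Ici).const_mul _)
    hsummable
  rw [funext hF, ← hswap, funext hFint, Phi, ← tsum_mul_left]
  refine tsum_congr fun i => ?_
  field_simp
  ring

lemma Phi_le_of_nuMass_le (hp : ∀ j, 0 < p j) (hsum : ∑' j, p j = 1) (hr : 1 ≤ r) {C δ : ℝ}
    (hC : 0 ≤ C) (hδ : 0 < δ) (hν : ∀ x, 0 < x → x < δ → nuMass p r x ≤ C * x ^ r)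
    (ht : 0 < t) : Phi p r t ≤ C + t ^ r * exp (-(t * δ)) / r ! := by
  have hpoint : ∀ s ∈ Ioi (0 : ℝ), nuMass p r s * exp (-(t * s)) ≤
      C * (s ^ r * exp (-(t * s))) + (Ici δ).indicator (fun s => exp (-(t * s))) s := by
    intro s (hs : 0 < s)
    rcases lt_or_ge s δ with h | h
    · rw [indicator_of_notMem (notMem_Ici.2 h), add_zero, ← mul_assoc]
      exact mul_le_mul_of_nonneg_right (hν s hs h) (exp_pos _).le
    · rw [indicator_of_mem (mem_Ici.2 h)]
      calc nuMass p r s * exp (-(t * s)) ≤ exp (-(t * s)) :=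
            mul_le_of_le_one_left (exp_pos _).le (nuMass_le_one (fun j => (hp j).le) hsum hr s)
        _ ≤ _ := le_add_of_nonneg_left (mul_nonneg hC (by positivity))
  have hgamma := integrableOn_pow_mul_exp_neg_mul_Ioi r ht
  have htail := (integrableOn_exp_neg_mul_Ioi 0 ht).indicator (measurableSet_Ici (a := δ))
  have hI := setIntegral_mono_on
    (integrableOn_nuMass_mul_exp_neg_mul (fun j => (hp j).le) hsum hr ht)
    ((hgamma.const_mul C).add htail) measurableSet_Ioi hpoint
  rw [integral_add' (hgamma.const_mul C) htail, integral_const_mul,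
    integral_pow_mul_exp_neg_mul_Ioi r ht, integral_indicator_Ici_exp_neg_mul hδ ht] at hI
  rw [Phi_eq_integral hp hsum hr ht]
  calc _ ≤ t ^ (r + 1) / r ! * (C * (r ! / t ^ (r + 1)) + exp (-(t * δ)) / t) := by gcongr
    _ = C + t ^ r * exp (-(t * δ)) / r ! := by field_simp; ring

lemma le_Phi_of_le_nuMass (hp : ∀ j, 0 < p j) (hsum : ∑' j, p j = 1) (hr : 1 ≤ r) {c δ : ℝ}
    (hδ : 0 < δ) (hν : ∀ x, 0 < x → x < δ → c * x ^ r ≤ nuMass p r x) (ht : 0 < t) :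
    c * (t ^ (r + 1) / r ! * ∫ s in (0)..δ, s ^ r * exp (-(t * s))) ≤ Phi p r t := by
  have hpoint : ∀ s ∈ Ioi (0 : ℝ),
      (Iio δ).indicator (fun s => c * (s ^ r * exp (-(t * s)))) s ≤
        nuMass p r s * exp (-(t * s)) := by
    intro s hs
    rcases lt_or_ge s δ with h | h
    · rw [indicator_of_mem (mem_Iio.2 h), ← mul_assoc]
      exact mul_le_mul_of_nonneg_right (hν s hs h) (exp_pos _).le
    · rw [indicator_of_notMem (notMem_Iio.2 h)]
      exact mul_nonneg (nuMass_nonneg (fun j => (hp j).le) s) (exp_pos _).le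
  have hI := setIntegral_mono_on
    (((integrableOn_pow_mul_exp_neg_mul_Ioi r ht).const_mul c).indicator measurableSet_Iio)
    (integrableOn_nuMass_mul_exp_neg_mul (fun j => (hp j).le) hsum hr ht) measurableSet_Ioi
    hpoint
  rw [setIntegral_indicator measurableSet_Iio, Ioi_inter_Iio, integral_const_mul,
    ← integral_Ioc_eq_integral_Ioo, ← intervalIntegral.integral_of_le hδ.le] at hI
  rw [Phi_eq_integral hp hsum hr ht, mul_left_comm]
  gcongr

end LaplaceRepresentation

namespace EReal

variable {α : Type*} {f : Filter α}

lemma liminf_coe_le_of_forall {u : α → ℝ} {L : EReal}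
    (h : ∀ c : ℝ, (∀ᶠ a in f, c ≤ u a) → (c : EReal) ≤ L) :
    liminf (fun a => (u a : EReal)) f ≤ L := by
  refine le_of_forall_lt_imp_le_of_dense fun b hb => ?_
  obtain ⟨c, hbc, hc⟩ := lt_iff_exists_real_btwn.1 hb
  exact hbc.le.trans <| h c <|
    (eventually_lt_of_lt_liminf hc).mono fun _ ha => (EReal.coe_lt_coe_iff.1 ha).le

lemma le_limsup_coe_of_forall {u : α → ℝ} {L : EReal}
    (h : ∀ C : ℝ, (∀ᶠ a in f, u a ≤ C) → L ≤ C) :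
    L ≤ limsup (fun a => (u a : EReal)) f := by
  refine le_of_forall_gt_imp_ge_of_dense fun b hb => ?_
  obtain ⟨C, hC, hCb⟩ := lt_iff_exists_real_btwn.1 hb
  refine (h C ?_).trans hCb.le
  exact (eventually_lt_of_limsup_lt hC).mono fun _ ha => (EReal.coe_lt_coe_iff.1 ha).le

lemma le_liminf_coe_of_tendsto [NeBot f] {v w : α → ℝ} {c : ℝ} (hw : Tendsto w f (𝓝 c))
    (hle : ∀ᶠ a in f, w a ≤ v a) : (c : EReal) ≤ liminf (fun a => (v a : EReal)) f :=
  calc (c : EReal) = liminf (fun a => (w a : EReal)) f :=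
        ((continuous_coe_real_ereal.tendsto c).comp hw).liminf_eq.symm
    _ ≤ _ := liminf_le_liminf (hle.mono fun _ ha => EReal.coe_le_coe ha)

lemma limsup_coe_le_of_tendsto [NeBot f] {v w : α → ℝ} {C : ℝ} (hw : Tendsto w f (𝓝 C))
    (hle : ∀ᶠ a in f, v a ≤ w a) : limsup (fun a => (v a : EReal)) f ≤ C :=
  calc limsup (fun a => (v a : EReal)) f ≤ limsup (fun a => (w a : EReal)) f :=
        limsup_le_limsup (hle.mono fun _ ha => EReal.coe_le_coe ha)
    _ = C := ((continuous_coe_real_ereal.tendsto C).comp hw).limsup_eq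

lemma limsup_coe_const_add_le [NeBot f] (c : ℝ) (u : α → ℝ) :
    limsup (fun a => ((c + u a : ℝ) : EReal)) f ≤ c + limsup (fun a => (u a : EReal)) f :=
  calc limsup (fun a => ((c + u a : ℝ) : EReal)) f
        = limsup ((fun _ => (c : EReal)) + fun a => (u a : EReal)) f := by
          simp only [coe_add]; rfl
    _ ≤ limsup (fun _ => (c : EReal)) f + limsup (fun a => (u a : EReal)) f :=
          limsup_add_le (.inl (by simp)) (.inl (by simp))
    _ = c + limsup (fun a => (u a : EReal)) f := by rw [limsup_const]

end EReal

section Asymptotics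

variable {p : ℕ → ℝ} {r : ℕ}

lemma le_nuMass_of_forall_le_rho (hp : ∀ j, 0 < p j) (hdec : Antitone p)
    (hsum : ∑' j, p j = 1) (hr : 1 ≤ r) {c : ℝ} {J : ℕ}
    (hc : ∀ j, J ≤ j → c ≤ rho p r j) {x : ℝ} (hx : 0 < x) (hxJ : x < p J) :
    c * x ^ r ≤ nuMass p r x := by
  obtain ⟨j, hJj, h1, h2⟩ := exists_le_lt_of_tendsto_zero hdec
    (summable_of_tsum_ne_zero (by simp [hsum])).tendsto_atTop_zero hx hxJ
  obtain ⟨hrho, hlt, -⟩ := nuMass_div_pow_bounds hp hdec hsum hr h1 h2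
  rw [← le_div_iff₀ (pow_pos hx r)]
  exact (hc j hJj).trans (hrho ▸ hlt.le)

lemma nuMass_le_of_forall_one_add_rho_le (hp : ∀ j, 0 < p j) (hdec : Antitone p)
    (hsum : ∑' j, p j = 1) (hr : 1 ≤ r) {C : ℝ} {J : ℕ}
    (hC : ∀ j, J ≤ j → 1 + rho p r j ≤ C) {x : ℝ} (hx : 0 < x) (hxJ : x < p J) :
    nuMass p r x ≤ C * x ^ r := by
  obtain ⟨j, hJj, h1, h2⟩ := exists_le_lt_of_tendsto_zero hdec
    (summable_of_tsum_ne_zero (by simp [hsum])).tendsto_atTop_zero hx hxJ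
  rw [← div_le_iff₀ (pow_pos hx r)]
  exact (nuMass_div_pow_bounds hp hdec hsum hr h1 h2).2.2.trans (hC (j + 1) (by omega))

lemma liminf_rho_le_liminf_Phi (hp : ∀ j, 0 < p j) (hdec : Antitone p)
    (hsum : ∑' j, p j = 1) (hr : 1 ≤ r) :
    liminf (fun j => (rho p r j : EReal)) atTop ≤
      liminf (fun t => (Phi p r t : EReal)) atTop := by
  refine EReal.liminf_coe_le_of_forall fun c hc => ?_
  obtain ⟨J, hJ⟩ := eventually_atTop.1 hc
  have hkernel := (tendsto_mul_intervalIntegral_pow_mul_exp_neg_mul r (hp J)).const_mul c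
  rw [mul_one] at hkernel
  refine EReal.le_liminf_coe_of_tendsto hkernel ?_
  filter_upwards [eventually_gt_atTop 0] with t ht
  exact le_Phi_of_le_nuMass hp hsum hr (hp J)
    (fun x hx hxJ => le_nuMass_of_forall_le_rho hp hdec hsum hr hJ hx hxJ) ht

lemma limsup_Phi_le_limsup_one_add_rho (hp : ∀ j, 0 < p j) (hdec : Antitone p)
    (hsum : ∑' j, p j = 1) (hr : 1 ≤ r) :
    limsup (fun t => (Phi p r t : EReal)) atTop ≤
      limsup (fun j => ((1 + rho p r j : ℝ) : EReal)) atTop := by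
  refine EReal.le_limsup_coe_of_forall fun C hC => ?_
  obtain ⟨J, hJ⟩ := eventually_atTop.1 hC
  have hC0 : 0 ≤ C := by linarith [hJ J le_rfl, rho_nonneg (fun j => (hp j).le) (r := r) J]
  have hdecay := ((tendsto_rpow_mul_exp_neg_mul_atTop_nhds_zero r (p J) (hp J)).div_const
    (r ! : ℝ)).const_add C
  simp only [rpow_natCast, zero_div, add_zero, neg_mul, mul_comm (p J)] at hdecay
  refine EReal.limsup_coe_le_of_tendsto hdecay ?_
  filter_upwards [eventually_gt_atTop 0] with t ht
  exact Phi_le_of_nuMass_le hp hsum hr hC0 (hp J)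
    (fun x hx hxJ => nuMass_le_of_forall_one_add_rho_le hp hdec hsum hr hJ hx hxJ) ht

end Asymptotics

theorem stmt_14 (p : ℕ → ℝ) (hp : ∀ j, 0 < p j) (hdec : ∀ j, p (j + 1) ≤ p j)
    (hsum : ∑' j : ℕ, p j = 1) (r : ℕ) (hr : 1 ≤ r) :
    (∀ j : ℕ, ∀ x : ℝ, p (j + 1) ≤ x → x < p j →
      rho p r j = nuMass p r (p (j + 1)) / p j ^ r ∧
      nuMass p r (p (j + 1)) / p j ^ r < nuMass p r x / x ^ r ∧
      nuMass p r x / x ^ r ≤ 1 + rho p r (j + 1)) ∧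
    Filter.liminf (fun j : ℕ => ((rho p r j : ℝ) : EReal)) Filter.atTop ≤
      Filter.liminf (fun t : ℝ => ((Phi p r t : ℝ) : EReal)) Filter.atTop ∧
    Filter.liminf (fun t : ℝ => ((Phi p r t : ℝ) : EReal)) Filter.atTop ≤
      Filter.limsup (fun t : ℝ => ((Phi p r t : ℝ) : EReal)) Filter.atTop ∧
    Filter.limsup (fun t : ℝ => ((Phi p r t : ℝ) : EReal)) Filter.atTop ≤
      1 + Filter.limsup (fun j : ℕ => ((rho p r j : ℝ) : EReal)) Filter.atTop := by
  have hanti : Antitone p := antitone_nat_of_succ_le hdec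
  refine ⟨fun j x h1 h2 => nuMass_div_pow_bounds hp hanti hsum hr h1 h2,
    liminf_rho_le_liminf_Phi hp hanti hsum hr, liminf_le_limsup, ?_⟩
  simpa only [EReal.coe_one] using
    (limsup_Phi_le_limsup_one_add_rho hp hanti hsum hr).trans (EReal.limsup_coe_const_add_le 1 _)
end
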